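/- arXiv:2302.11322 — 11 statements merged into one kernel-verified Lean document; each statement's English description precedes it below -/
import Mathlib

section
/- Suppose there exists a network A* that correctly specifies the interference structure. Assume (Assumption 1) that the exposure mapping f separates networks: for any two networks A ≠ A' both satisfying positivity, there exist a treatment vector z ∈ 𝒵 and a unit i with f(z,A_i) ≠ f(z,A'_i); and assume (Assumption 2) that Ỹ_i(c_ℓ) ≠ Ỹ_i(c_k) for every unit i and every pair of distinct exposure levels c_ℓ ≠ c_k. Then A* is the unique network correctly specifying the interference structure. -/
open Finset

noncomputable section

open scoped Classical

/-- A network on `n` units: symmetric Boolean adjacency matrix with zero diagonal. -/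
def IsNetwork {n : ℕ} (A : Fin n → Fin n → Bool) : Prop :=
  (∀ i j, A i j = A j i) ∧ ∀ i, A i i = false

/-- Real-valued indicator of a proposition. -/
def ind (p : Prop) [Decidable p] : ℝ := if p then 1 else 0

/-- Expectation of `g` with respect to the distribution `P` on the finite treatment space. -/
def expec {Z : Type} [Fintype Z] (P : Z → ℝ) (g : Z → ℝ) : ℝ := ∑ z, P z * g z

/-- Exposure probability `p_i^A(c)`. -/
def pExp {n : ℕ} {Z C : Type} [Fintype Z] [DecidableEq C] (P : Z → ℝ)
    (f : Z → (Fin n → Bool) → C) (A : Fin n → Fin n → Bool) (i : Fin n) (c : C) : ℝ :=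
  expec P (fun z => ind (f z (A i) = c))

/-- The network `A` satisfies positivity. -/
def Positivity {n : ℕ} {Z C : Type} [Fintype Z] [DecidableEq C] (P : Z → ℝ)
    (f : Z → (Fin n → Bool) → C) (A : Fin n → Fin n → Bool) : Prop :=
  ∀ (i : Fin n) (c : C), 0 < pExp P f A i c

/-- The network `A` correctly specifies the interference structure:
positivity together with `Y_i(z) = Ỹ_i(f(z, A_i))`. -/
def CorrectlySpecifies {n : ℕ} {Z C : Type} [Fintype Z] [DecidableEq C] (P : Z → ℝ)
    (f : Z → (Fin n → Bool) → C) (Y : Fin n → Z → ℝ) (Yt : Fin n → C → ℝ)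
    (A : Fin n → Fin n → Bool) : Prop :=
  Positivity P f A ∧ ∀ (i : Fin n) (z : Z), Y i z = Yt i (f z (A i))

/-- Mean potential outcome `μ(c)`. -/
def muBar {n : ℕ} {C : Type} (Yt : Fin n → C → ℝ) (c : C) : ℝ :=
  (1 / (n : ℝ)) * ∑ i, Yt i c

/-- Causal effect `τ(c, c')`. -/
def tauBar {n : ℕ} {C : Type} (Yt : Fin n → C → ℝ) (c c' : C) : ℝ :=
  muBar Yt c - muBar Yt c'

/-- Horvitz–Thompson estimator of `μ(c)` using network `A` and observed outcomes `Yo`. -/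
def muHat {n : ℕ} {Z C : Type} [Fintype Z] [DecidableEq C] (P : Z → ℝ)
    (f : Z → (Fin n → Bool) → C) (A : Fin n → Fin n → Bool) (Yo : Z → Fin n → ℝ)
    (c : C) (z : Z) : ℝ :=
  (1 / (n : ℝ)) * ∑ i, ind (f z (A i) = c) * Yo z i / pExp P f A i c

/-- Plug-in Horvitz–Thompson estimator of `τ(c, c')`. -/
def tauHat {n : ℕ} {Z C : Type} [Fintype Z] [DecidableEq C] (P : Z → ℝ)
    (f : Z → (Fin n → Bool) → C) (A : Fin n → Fin n → Bool) (Yo : Z → Fin n → ℝ)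
    (c c' : C) (z : Z) : ℝ :=
  muHat P f A Yo c z - muHat P f A Yo c' z

/-- Joint exposure probability `p_i^{(A, A')}(c, c')`. -/
def pJoint {n : ℕ} {Z C : Type} [Fintype Z] [DecidableEq C] (P : Z → ℝ)
    (f : Z → (Fin n → Bool) → C) (A A' : Fin n → Fin n → Bool) (i : Fin n) (c c' : C) : ℝ :=
  expec P (fun z => ind (f z (A i) = c) * ind (f z (A' i) = c'))

/-- Conditional exposure probability `p_i(c; A ∣ c'; A')`. -/
def pCond {n : ℕ} {Z C : Type} [Fintype Z] [DecidableEq C] (P : Z → ℝ)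
    (f : Z → (Fin n → Bool) → C) (A A' : Fin n → Fin n → Bool) (i : Fin n) (c c' : C) : ℝ :=
  pJoint P f A A' i c c' / pExp P f A' i c'

/-- Proposition 1: under the separation assumption on the exposure mapping and the
no-sharp-null assumption on the induced potential outcomes, a correctly specifying
network is unique. -/
theorem correct_network_unique {n : ℕ} {Z C : Type} [Fintype Z] [Fintype C] [DecidableEq C]
    (P : Z → ℝ) (hP : ∀ z, 0 ≤ P z) (hPsum : ∑ z, P z = 1)
    (f : Z → (Fin n → Bool) → C) (Y : Fin n → Z → ℝ) (Yt : Fin n → C → ℝ)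
    (Astar : Fin n → Fin n → Bool) (hAstarNet : IsNetwork Astar)
    (hAstar : CorrectlySpecifies P f Y Yt Astar)
    (hsep : ∀ A A' : Fin n → Fin n → Bool, IsNetwork A → IsNetwork A' →
      Positivity P f A → Positivity P f A' → A ≠ A' →
        ∃ (z : Z) (i : Fin n), f z (A i) ≠ f z (A' i))
    (hnonnull : ∀ (i : Fin n) (c c' : C), c ≠ c' → Yt i c ≠ Yt i c') :
    ∀ A : Fin n → Fin n → Bool, IsNetwork A → CorrectlySpecifies P f Y Yt A → A = Astar := by
  intro A hANet hA
  by_contra hne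
  obtain ⟨z, i, hfi⟩ := hsep A Astar hANet hAstarNet hA.1 hAstar.1 hne
  exact hnonnull i _ _ hfi ((hA.2 i z).symm.trans (hAstar.2 i z))
end
end

section
/- Let A* be a network that correctly specifies the interference structure and let A^sp be any network satisfying positivity. Assume the observed outcomes satisfy consistency with respect to A*, and that |Ỹ_i(c)| ≤ κ for all units i and all levels c, for some κ > 0. Then for every exposure level c, |E_Z[μ̂_{A^sp}(c)(Z)] − μ(c)| ≤ (2κ/n) · Σ_{i=1}^n (1 − p_i(c;A* | c;A^sp)). -/
open Finset

noncomputable section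

open scoped Classical

/-- Theorem 1: bound on the absolute bias of the Horvitz–Thompson estimator computed
with a (possibly misspecified) network `Asp`. -/
theorem HT_bias_bound {n : ℕ} {Z C : Type} [Fintype Z] [Fintype C] [DecidableEq C]
    (P : Z → ℝ) (hP : ∀ z, 0 ≤ P z) (hPsum : ∑ z, P z = 1)
    (f : Z → (Fin n → Bool) → C) (Y : Fin n → Z → ℝ) (Yt : Fin n → C → ℝ)
    (Astar Asp : Fin n → Fin n → Bool)
    (hAstarNet : IsNetwork Astar) (hAspNet : IsNetwork Asp)
    (hAstar : CorrectlySpecifies P f Y Yt Astar)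
    (hAspPos : Positivity P f Asp)
    (Yo : Z → Fin n → ℝ) (hYo : ∀ (z : Z) (i : Fin n), Yo z i = Yt i (f z (Astar i)))
    (κ : ℝ) (hκ : 0 < κ) (hbdd : ∀ (i : Fin n) (c : C), |Yt i c| ≤ κ) :
    ∀ c : C,
      |expec P (fun z => muHat P f Asp Yo c z) - muBar Yt c| ≤
        (2 * κ / (n : ℝ)) * ∑ i, (1 - pCond P f Astar Asp i c c) := by
  intro c
  have key : ∀ i : Fin n,
      |expec P (fun z => ind (f z (Asp i) = c) * Yo z i / pExp P f Asp i c) - Yt i c| ≤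
        2 * κ * (1 - pCond P f Astar Asp i c c) := by
    intro i
    have hp : 0 < pExp P f Asp i c := hAspPos i c
    have e3 : expec P (fun z => ind (f z (Asp i) = c) * Yo z i / pExp P f Asp i c) - Yt i c
        = (∑ z, P z * (ind (f z (Asp i) = c) * (Yt i (f z (Astar i)) - Yt i c))) /
            pExp P f Asp i c := by
      rw [eq_div_iff hp.ne', sub_mul]
      unfold expec
      rw [Finset.sum_mul]
      have hpe : Yt i c * pExp P f Asp i c
          = ∑ z, P z * (ind (f z (Asp i) = c) * Yt i c) := by
        unfold pExp expec
        rw [Finset.mul_sum]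
        exact Finset.sum_congr rfl fun z _ => by ring
      rw [hpe, ← Finset.sum_sub_distrib]
      apply Finset.sum_congr rfl
      intro z _
      simp only [hYo]
      field_simp
    have numb : |∑ z, P z * (ind (f z (Asp i) = c) * (Yt i (f z (Astar i)) - Yt i c))|
        ≤ 2 * κ * (pExp P f Asp i c - pJoint P f Astar Asp i c c) := by
      have hrw : 2 * κ * (pExp P f Asp i c - pJoint P f Astar Asp i c c)
          = ∑ z, P z * ((ind (f z (Asp i) = c)
              - ind (f z (Astar i) = c) * ind (f z (Asp i) = c)) * (2 * κ)) := by
        unfold pExp pJoint expec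
        rw [← Finset.sum_sub_distrib, Finset.mul_sum]
        exact Finset.sum_congr rfl fun z _ => by ring
      rw [hrw]
      refine (Finset.abs_sum_le_sum_abs _ _).trans (Finset.sum_le_sum ?_)
      intro z _
      rw [abs_mul, abs_of_nonneg (hP z)]
      refine mul_le_mul_of_nonneg_left ?_ (hP z)
      by_cases hstar : f z (Astar i) = c
      · simp [ind, hstar]
      · by_cases hsp : f z (Asp i) = c
        · simp only [ind, hstar, hsp, if_true, if_false, one_mul, mul_zero, zero_mul,
            sub_zero, abs_one]
          have h1 := abs_le.mp (hbdd i (f z (Astar i)))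
          have h2 := abs_le.mp (hbdd i c)
          rw [abs_le]
          constructor <;> simp <;> nlinarith
        · simp [ind, hsp]
    rw [e3, abs_div, abs_of_pos hp, div_le_iff₀ hp]
    have hrw2 : 2 * κ * (1 - pCond P f Astar Asp i c c) * pExp P f Asp i c
        = 2 * κ * (pExp P f Asp i c - pJoint P f Astar Asp i c c) := by
      unfold pCond
      field_simp
    rw [hrw2]
    exact numb
  have h1 : ∑ z, P z * muHat P f Asp Yo c z
      = ∑ i, (1 / (n : ℝ)) *
          expec P (fun z => ind (f z (Asp i) = c) * Yo z i / pExp P f Asp i c) := by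
    unfold muHat expec
    calc ∑ z, P z * ((1 / (n : ℝ)) * ∑ i, ind (f z (Asp i) = c) * Yo z i / pExp P f Asp i c)
        = ∑ z, ∑ i, (1 / (n : ℝ)) *
            (P z * (ind (f z (Asp i) = c) * Yo z i / pExp P f Asp i c)) := by
          refine Finset.sum_congr rfl fun z _ => ?_
          simp only [Finset.mul_sum]
          exact Finset.sum_congr rfl fun i _ => by ring
      _ = ∑ i, ∑ z, (1 / (n : ℝ)) *
            (P z * (ind (f z (Asp i) = c) * Yo z i / pExp P f Asp i c)) := Finset.sum_comm
      _ = ∑ i, (1 / (n : ℝ)) *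
            ∑ z, P z * (ind (f z (Asp i) = c) * Yo z i / pExp P f Asp i c) := by
          exact Finset.sum_congr rfl fun i _ => by rw [Finset.mul_sum]
  have main : expec P (fun z => muHat P f Asp Yo c z) - muBar Yt c
      = (1 / (n : ℝ)) * ∑ i,
          (expec P (fun z => ind (f z (Asp i) = c) * Yo z i / pExp P f Asp i c) - Yt i c) := by
    show (∑ z, P z * muHat P f Asp Yo c z) - muBar Yt c = _
    rw [h1, muBar, Finset.mul_sum, Finset.mul_sum, ← Finset.sum_sub_distrib]
    exact Finset.sum_congr rfl fun i _ => by ring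
  rw [main]
  have hn : (0:ℝ) ≤ 1 / (n : ℝ) := by positivity
  calc |(1 / (n : ℝ)) * ∑ i,
        (expec P (fun z => ind (f z (Asp i) = c) * Yo z i / pExp P f Asp i c) - Yt i c)|
      = (1 / (n : ℝ)) * |∑ i,
        (expec P (fun z => ind (f z (Asp i) = c) * Yo z i / pExp P f Asp i c) - Yt i c)| := by
        rw [abs_mul, abs_of_nonneg hn]
    _ ≤ (1 / (n : ℝ)) * ∑ i,
        |expec P (fun z => ind (f z (Asp i) = c) * Yo z i / pExp P f Asp i c) - Yt i c| := by
        exact mul_le_mul_of_nonneg_left (Finset.abs_sum_le_sum_abs _ _) hn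
    _ ≤ (1 / (n : ℝ)) * ∑ i, 2 * κ * (1 - pCond P f Astar Asp i c c) := by
        exact mul_le_mul_of_nonneg_left (Finset.sum_le_sum fun i _ => key i) hn
    _ = (2 * κ / (n : ℝ)) * ∑ i, (1 - pCond P f Astar Asp i c c) := by
        rw [Finset.mul_sum, Finset.mul_sum]
        exact Finset.sum_congr rfl fun i _ => by ring
end
end

section
/- Let A* be a network that correctly specifies the interference structure and let A^sp be any network satisfying positivity. Assume the observed outcomes satisfy consistency with respect to A*, and that |Ỹ_i(c)| ≤ κ for all units i and all levels c, for some κ > 0. Then for every pair of exposure levels c_ℓ, c_k, |E_Z[τ̂_{A^sp}(c_ℓ,c_k)(Z)] − τ(c_ℓ,c_k)| ≤ (2κ/n) · Σ_{i=1}^n [ (1 − p_i(c_ℓ;A* | c_ℓ;A^sp)) + (1 − p_i(c_k;A* | c_k;A^sp)) ]. -/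
open Finset

noncomputable section

open scoped Classical

lemma ind_nonneg (p : Prop) [Decidable p] : 0 ≤ ind p := by
  unfold ind; split <;> norm_num

lemma ind_le_one (p : Prop) [Decidable p] : ind p ≤ 1 := by
  unfold ind; split <;> norm_num

lemma unit_bias {n : ℕ} {Z C : Type} [Fintype Z] [DecidableEq C]
    (P : Z → ℝ) (hP : ∀ z, 0 ≤ P z)
    (f : Z → (Fin n → Bool) → C) (Yt : Fin n → C → ℝ)
    (Astar Asp : Fin n → Fin n → Bool)
    (hAspPos : Positivity P f Asp)
    (κ : ℝ) (hκ : 0 < κ) (hbdd : ∀ (i : Fin n) (c : C), |Yt i c| ≤ κ)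
    (i : Fin n) (c : C) :
    |expec P (fun z => ind (f z (Asp i) = c) * Yt i (f z (Astar i))) / pExp P f Asp i c
      - Yt i c| ≤ 2 * κ * (1 - pCond P f Astar Asp i c c) := by
  have hppos := hAspPos i c
  set p := pExp P f Asp i c with hp
  set J := pJoint P f Astar Asp i c c with hJ
  have hJle : J ≤ p := by
    rw [hJ, hp]; unfold pJoint pExp expec
    apply Finset.sum_le_sum
    intro z _
    apply mul_le_mul_of_nonneg_left _ (hP z)
    calc ind (f z (Astar i) = c) * ind (f z (Asp i) = c)
        ≤ 1 * ind (f z (Asp i) = c) :=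
          mul_le_mul_of_nonneg_right (ind_le_one _) (ind_nonneg _)
      _ = ind (f z (Asp i) = c) := one_mul _
  have hJnn : 0 ≤ J := by
    rw [hJ]; unfold pJoint expec
    apply Finset.sum_nonneg
    intro z _
    exact mul_nonneg (hP z) (mul_nonneg (ind_nonneg _) (ind_nonneg _))
  -- pointwise decomposition
  have key : ∀ z, ind (f z (Asp i) = c) * Yt i (f z (Astar i))
      = ind (f z (Astar i) = c) * ind (f z (Asp i) = c) * Yt i c
        + ind (f z (Asp i) = c) * (1 - ind (f z (Astar i) = c)) * Yt i (f z (Astar i)) := by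
    intro z
    by_cases h : f z (Astar i) = c
    · simp [ind, h]
    · simp [ind, h]
  set R := expec P (fun z =>
      ind (f z (Asp i) = c) * (1 - ind (f z (Astar i) = c)) * Yt i (f z (Astar i))) with hR
  have hdecomp : expec P (fun z => ind (f z (Asp i) = c) * Yt i (f z (Astar i)))
      = J * Yt i c + R := by
    rw [hR, hJ]; unfold pJoint expec
    rw [Finset.sum_mul, ← Finset.sum_add_distrib]
    apply Finset.sum_congr rfl
    intro z _
    dsimp only
    rw [key z]; ring
  have hRbound : |R| ≤ κ * (p - J) := by
    have h1 : |R| ≤ ∑ z, P z * (ind (f z (Asp i) = c) * (1 - ind (f z (Astar i) = c))) * κ := by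
      rw [hR]; unfold expec
      refine (Finset.abs_sum_le_sum_abs _ _).trans (Finset.sum_le_sum ?_)
      intro z _
      have hnn : 0 ≤ P z * (ind (f z (Asp i) = c) * (1 - ind (f z (Astar i) = c))) :=
        mul_nonneg (hP z) (mul_nonneg (ind_nonneg _)
          (by linarith [ind_le_one (f z (Astar i) = c)]))
      rw [show P z * (ind (f z (Asp i) = c) * (1 - ind (f z (Astar i) = c)) *
            Yt i (f z (Astar i)))
          = (P z * (ind (f z (Asp i) = c) * (1 - ind (f z (Astar i) = c)))) *
            Yt i (f z (Astar i)) by ring,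
        abs_mul, abs_of_nonneg hnn]
      exact mul_le_mul_of_nonneg_left (hbdd i _) hnn
    have h2 : ∑ z, P z * (ind (f z (Asp i) = c) * (1 - ind (f z (Astar i) = c))) * κ
        = κ * (p - J) := by
      rw [hp, hJ]; unfold pExp pJoint expec
      rw [mul_sub, Finset.mul_sum, Finset.mul_sum, ← Finset.sum_sub_distrib]
      apply Finset.sum_congr rfl
      intro z _; dsimp only; ring
    linarith
  have hpc : pCond P f Astar Asp i c c = J / p := rfl
  rw [hpc, hdecomp]
  have hq1 : J / p ≤ 1 := by
    rw [div_le_one hppos]; exact hJle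
  have habs : |(J * Yt i c + R) / p - Yt i c|
      ≤ (1 - J / p) * |Yt i c| + |R| / p := by
    have : (J * Yt i c + R) / p - Yt i c = (J / p - 1) * Yt i c + R / p := by
      field_simp; ring
    rw [this]
    refine (abs_add_le _ _).trans ?_
    rw [abs_mul, abs_div, abs_of_nonneg (le_of_lt hppos)]
    have : |J / p - 1| = 1 - J / p := by
      rw [abs_of_nonpos (by linarith)]; ring
    rw [this]
  have hfin : (1 - J / p) * |Yt i c| + |R| / p ≤ 2 * κ * (1 - J / p) := by
    have h3 : (1 - J / p) * |Yt i c| ≤ (1 - J / p) * κ :=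
      mul_le_mul_of_nonneg_left (hbdd i c) (by linarith)
    have h4 : |R| / p ≤ κ * (p - J) / p := by
      exact (div_le_div_iff_of_pos_right hppos).mpr hRbound
    have h5 : κ * (p - J) / p = κ * (1 - J / p) := by
      field_simp
    nlinarith [h4, h5]
  linarith

/-- Bound on the absolute bias of the plug-in Horvitz–Thompson causal effect estimator
computed with a (possibly misspecified) network `Asp`. -/
theorem HT_tau_bias_bound {n : ℕ} {Z C : Type} [Fintype Z] [Fintype C] [DecidableEq C]
    (P : Z → ℝ) (hP : ∀ z, 0 ≤ P z) (hPsum : ∑ z, P z = 1)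
    (f : Z → (Fin n → Bool) → C) (Y : Fin n → Z → ℝ) (Yt : Fin n → C → ℝ)
    (Astar Asp : Fin n → Fin n → Bool)
    (hAstarNet : IsNetwork Astar) (hAspNet : IsNetwork Asp)
    (hAstar : CorrectlySpecifies P f Y Yt Astar)
    (hAspPos : Positivity P f Asp)
    (Yo : Z → Fin n → ℝ) (hYo : ∀ (z : Z) (i : Fin n), Yo z i = Yt i (f z (Astar i)))
    (κ : ℝ) (hκ : 0 < κ) (hbdd : ∀ (i : Fin n) (c : C), |Yt i c| ≤ κ) :
    ∀ cl ck : C,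
      |expec P (fun z => tauHat P f Asp Yo cl ck z) - tauBar Yt cl ck| ≤
        (2 * κ / (n : ℝ)) *
          ∑ i, ((1 - pCond P f Astar Asp i cl cl) + (1 - pCond P f Astar Asp i ck ck)) := by
  intro cl ck
  have hexp : ∀ c : C, expec P (fun z => muHat P f Asp Yo c z)
      = (1/(n:ℝ)) * ∑ i, expec P (fun z => ind (f z (Asp i) = c) * Yt i (f z (Astar i)))
          / pExp P f Asp i c := by
    intro c
    unfold expec muHat
    calc ∑ z, P z * ((1/(n:ℝ)) * ∑ i, ind (f z (Asp i) = c) * Yo z i / pExp P f Asp i c)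
        = ∑ z, ∑ i, (1/(n:ℝ)) *
            (P z * (ind (f z (Asp i) = c) * Yt i (f z (Astar i))) / pExp P f Asp i c) := by
          apply Finset.sum_congr rfl
          intro z _
          rw [Finset.mul_sum, Finset.mul_sum]
          apply Finset.sum_congr rfl
          intro i _
          rw [hYo]; ring
      _ = ∑ i, ∑ z, (1/(n:ℝ)) *
            (P z * (ind (f z (Asp i) = c) * Yt i (f z (Astar i))) / pExp P f Asp i c) :=
          Finset.sum_comm
      _ = (1/(n:ℝ)) * ∑ i, (∑ z, P z * (ind (f z (Asp i) = c) * Yt i (f z (Astar i))))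
            / pExp P f Asp i c := by
          rw [Finset.mul_sum]
          apply Finset.sum_congr rfl
          intro i _
          rw [Finset.sum_div, Finset.mul_sum]
  set e : Fin n → C → ℝ := fun i c =>
    expec P (fun z => ind (f z (Asp i) = c) * Yt i (f z (Astar i))) / pExp P f Asp i c with he
  have hτ : expec P (fun z => tauHat P f Asp Yo cl ck z)
      = expec P (fun z => muHat P f Asp Yo cl z) - expec P (fun z => muHat P f Asp Yo ck z) := by
    unfold expec tauHat
    rw [← Finset.sum_sub_distrib]
    apply Finset.sum_congr rfl
    intro z _; ring
  have hbias : expec P (fun z => tauHat P f Asp Yo cl ck z) - tauBar Yt cl ck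
      = (1/(n:ℝ)) * ∑ i, ((e i cl - Yt i cl) - (e i ck - Yt i ck)) := by
    rw [hτ, hexp cl, hexp ck]
    unfold tauBar muBar
    simp only [Finset.mul_sum]
    rw [← Finset.sum_sub_distrib, ← Finset.sum_sub_distrib, ← Finset.sum_sub_distrib]
    apply Finset.sum_congr rfl
    intro i _; simp only [he]; ring
  rw [hbias]
  have hnn : (0:ℝ) ≤ 1/(n:ℝ) := by positivity
  calc |(1/(n:ℝ)) * ∑ i, ((e i cl - Yt i cl) - (e i ck - Yt i ck))|
      ≤ (1/(n:ℝ)) * ∑ i, |(e i cl - Yt i cl) - (e i ck - Yt i ck)| := by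
        rw [abs_mul, abs_of_nonneg hnn]
        exact mul_le_mul_of_nonneg_left (Finset.abs_sum_le_sum_abs _ _) hnn
    _ ≤ (1/(n:ℝ)) * ∑ i, (2 * κ * (1 - pCond P f Astar Asp i cl cl)
          + 2 * κ * (1 - pCond P f Astar Asp i ck ck)) := by
        apply mul_le_mul_of_nonneg_left _ hnn
        apply Finset.sum_le_sum
        intro i _
        refine (abs_sub _ _).trans ?_
        exact add_le_add
          (unit_bias P hP f Yt Astar Asp hAspPos κ hκ hbdd i cl)
          (unit_bias P hP f Yt Astar Asp hAspPos κ hκ hbdd i ck)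
    _ = (2 * κ / (n : ℝ)) *
          ∑ i, ((1 - pCond P f Astar Asp i cl cl) + (1 - pCond P f Astar Asp i ck ck)) := by
        rw [Finset.mul_sum, Finset.mul_sum]
        apply Finset.sum_congr rfl
        intro i _; ring
end
end

section
/- Suppose the specified network A^sp correctly specifies the interference structure and the observed outcomes satisfy consistency with respect to some (possibly different) network A* that correctly specifies the interference structure. Then the Horvitz–Thompson estimator is unbiased: E_Z[μ̂_{A^sp}(c)(Z)] = μ(c) for every exposure level c. -/
open Finset

noncomputable section

open scoped Classical

/-- Corollary 1: if the specified network correctly specifies the interference structure,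
the Horvitz–Thompson estimator is unbiased. -/
theorem HT_unbiased_of_correct {n : ℕ} {Z C : Type} [Fintype Z] [Fintype C] [DecidableEq C]
    (P : Z → ℝ) (hP : ∀ z, 0 ≤ P z) (hPsum : ∑ z, P z = 1)
    (f : Z → (Fin n → Bool) → C) (Y : Fin n → Z → ℝ) (Yt : Fin n → C → ℝ)
    (Astar Asp : Fin n → Fin n → Bool)
    (hAstarNet : IsNetwork Astar) (hAspNet : IsNetwork Asp)
    (hAstar : CorrectlySpecifies P f Y Yt Astar)
    (hAsp : CorrectlySpecifies P f Y Yt Asp)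
    (Yo : Z → Fin n → ℝ) (hYo : ∀ (z : Z) (i : Fin n), Yo z i = Yt i (f z (Astar i))) :
    ∀ c : C, expec P (fun z => muHat P f Asp Yo c z) = muBar Yt c := by
  intro c
  obtain ⟨hpos, hspec⟩ := hAsp
  obtain ⟨_, hspecStar⟩ := hAstar
  have key : ∀ (z : Z) (i : Fin n),
      ind (f z (Asp i) = c) * Yo z i = ind (f z (Asp i) = c) * Yt i c := by
    intro z i
    by_cases h : f z (Asp i) = c
    · rw [hYo, ← hspecStar, hspec, h]
    · simp [ind, h]
  unfold expec muHat muBar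
  rw [show (∑ z, P z * ((1 / (n : ℝ)) * ∑ i, ind (f z (Asp i) = c) * Yo z i / pExp P f Asp i c))
      = (1 / (n : ℝ)) * ∑ i, ∑ z, P z * (ind (f z (Asp i) = c) * Yo z i / pExp P f Asp i c) by
    simp_rw [Finset.mul_sum]
    rw [Finset.sum_comm]
    apply Finset.sum_congr rfl; intro i _
    apply Finset.sum_congr rfl; intro z _
    ring]
  congr 1
  apply Finset.sum_congr rfl
  intro i _
  have hpi : pExp P f Asp i c ≠ 0 := ne_of_gt (hpos i c)
  have : (∑ z, P z * (ind (f z (Asp i) = c) * Yo z i / pExp P f Asp i c))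
      = (∑ z, P z * ind (f z (Asp i) = c)) * Yt i c / pExp P f Asp i c := by
    rw [Finset.sum_mul, Finset.sum_div]
    apply Finset.sum_congr rfl
    intro z _
    rw [key]
    ring
  rw [this]
  have hpe : (∑ z, P z * ind (f z (Asp i) = c)) = pExp P f Asp i c := rfl
  rw [hpe]
  field_simp
end
end

section
/- Let A* be a network that correctly specifies the interference structure and let A^sp be any network satisfying positivity. Under consistency with respect to A*, for every exposure level c_k, E_Z[μ̂_{A^sp}(c_k)(Z)] = (1/n) Σ_{i=1}^n Σ_{j=1}^L p_i(c_j;A* | c_k;A^sp) · Ỹ_i(c_j). -/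
open Finset

noncomputable section

open scoped Classical

/-- Exact expectation of the Horvitz–Thompson estimator under a (possibly misspecified)
network `Asp`: a weighted combination of all potential outcomes with conditional
exposure probability weights. -/
theorem HT_exact_expectation {n : ℕ} {Z C : Type} [Fintype Z] [Fintype C] [DecidableEq C]
    (P : Z → ℝ) (hP : ∀ z, 0 ≤ P z) (hPsum : ∑ z, P z = 1)
    (f : Z → (Fin n → Bool) → C) (Y : Fin n → Z → ℝ) (Yt : Fin n → C → ℝ)
    (Astar Asp : Fin n → Fin n → Bool)
    (hAstarNet : IsNetwork Astar) (hAspNet : IsNetwork Asp)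
    (hAstar : CorrectlySpecifies P f Y Yt Astar)
    (hAspPos : Positivity P f Asp)
    (Yo : Z → Fin n → ℝ) (hYo : ∀ (z : Z) (i : Fin n), Yo z i = Yt i (f z (Astar i))) :
    ∀ ck : C,
      expec P (fun z => muHat P f Asp Yo ck z) =
        (1 / (n : ℝ)) * ∑ i, ∑ cj : C, pCond P f Astar Asp i cj ck * Yt i cj := by
  intro ck
  have key : ∀ (z : Z) (i : Fin n), Yt i (f z (Astar i)) =
      ∑ cj : C, ind (f z (Astar i) = cj) * Yt i cj := by
    intro z i
    rw [Finset.sum_eq_single (f z (Astar i))]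
    · simp [ind]
    · intro b _ hb
      simp [ind, Ne.symm hb]
    · simp
  simp only [expec, muHat, pCond, pJoint, pExp, expec, hYo, key]
  simp only [Finset.mul_sum, Finset.sum_div, Finset.sum_mul]
  rw [Finset.sum_comm]
  refine Finset.sum_congr rfl fun i _ => ?_
  rw [Finset.sum_comm]
  refine Finset.sum_congr rfl fun cj _ => Finset.sum_congr rfl fun z _ => ?_
  ring
end
end

section
/- Let A* be a network that correctly specifies the interference structure and let A^sp be any network satisfying positivity. Under consistency with respect to A*, for all exposure levels c_ℓ, c_k: E_Z[τ̂_{A^sp}(c_ℓ,c_k)(Z)] = τ(c_ℓ,c_k) + B(c_ℓ,c_k;A^sp), where B(c_ℓ,c_k;A^sp) = (1/n) Σ_{i=1}^n Σ_{j=1}^L [ q_i(c_j;A* | c_ℓ;A^sp) − q_i(c_j;A* | c_k;A^sp) ] · Ỹ_i(c_j), and q_i(c_j;A* | c_k;A^sp) equals p_i(c_j;A* | c_k;A^sp) when j ≠ k and equals p_i(c_j;A* | c_k;A^sp) − 1 when j = k. -/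
open Finset

noncomputable section

open scoped Classical

lemma sum_ind_mul_left {C : Type} [Fintype C] [DecidableEq C] (g : C → ℝ) (c : C) :
    ∑ cj, ind (c = cj) * g cj = g c := by
  rw [Finset.sum_eq_single c]
  · simp [ind]
  · intro b _ hb; simp [ind, (Ne.symm hb : c ≠ b)]
  · intro h; exact absurd (Finset.mem_univ c) h

lemma sum_ind_mul_right {C : Type} [Fintype C] [DecidableEq C] (g : C → ℝ) (c : C) :
    ∑ cj, ind (cj = c) * g cj = g c := by
  rw [Finset.sum_eq_single c]
  · simp [ind]
  · intro b _ hb; simp [ind, hb]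
  · intro h; exact absurd (Finset.mem_univ c) h

lemma muHat_expec {n : ℕ} {Z C : Type} [Fintype Z] [Fintype C] [DecidableEq C]
    (P : Z → ℝ) (f : Z → (Fin n → Bool) → C) (Yt : Fin n → C → ℝ)
    (Astar Asp : Fin n → Fin n → Bool)
    (Yo : Z → Fin n → ℝ) (hYo : ∀ z i, Yo z i = Yt i (f z (Astar i))) (c : C) :
    expec P (fun z => muHat P f Asp Yo c z) =
      (1 / (n : ℝ)) * ∑ i, ∑ cj : C, pCond P f Astar Asp i cj c * Yt i cj := by
  have unit : ∀ i : Fin n,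
      (∑ z, P z * (ind (f z (Asp i) = c) * Yo z i / pExp P f Asp i c)) =
        ∑ cj : C, pCond P f Astar Asp i cj c * Yt i cj := by
    intro i
    have h1 : ∀ z, P z * (ind (f z (Asp i) = c) * Yo z i / pExp P f Asp i c) =
        ∑ cj : C, (P z * (ind (f z (Astar i) = cj) * ind (f z (Asp i) = c))) /
          pExp P f Asp i c * Yt i cj := by
      intro z
      rw [hYo z i, ← sum_ind_mul_left (Yt i) (f z (Astar i))]
      simp only [Finset.mul_sum, Finset.sum_div]
      exact Finset.sum_congr rfl fun cj _ => by ring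
    rw [Finset.sum_congr rfl fun z _ => h1 z, Finset.sum_comm]
    refine Finset.sum_congr rfl fun cj _ => ?_
    rw [pCond, pJoint, expec, ← Finset.sum_mul, ← Finset.sum_div]
  simp only [expec, muHat]
  rw [show (∑ z, P z * ((1 / (n : ℝ)) *
        ∑ i, ind (f z (Asp i) = c) * Yo z i / pExp P f Asp i c)) =
      (1 / (n : ℝ)) * ∑ i, ∑ z, P z *
        (ind (f z (Asp i) = c) * Yo z i / pExp P f Asp i c) from ?_]
  · exact congrArg _ (Finset.sum_congr rfl fun i _ => unit i)
  · simp only [Finset.mul_sum]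
    rw [Finset.sum_comm]
    exact Finset.sum_congr rfl fun i _ => Finset.sum_congr rfl fun z _ => by ring

/-- Exact bias of the plug-in Horvitz–Thompson causal effect estimator under a
(possibly misspecified) network `Asp`. -/
theorem HT_tau_exact_bias {n : ℕ} {Z C : Type} [Fintype Z] [Fintype C] [DecidableEq C]
    (P : Z → ℝ) (hP : ∀ z, 0 ≤ P z) (hPsum : ∑ z, P z = 1)
    (f : Z → (Fin n → Bool) → C) (Y : Fin n → Z → ℝ) (Yt : Fin n → C → ℝ)
    (Astar Asp : Fin n → Fin n → Bool)
    (hAstarNet : IsNetwork Astar) (hAspNet : IsNetwork Asp)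
    (hAstar : CorrectlySpecifies P f Y Yt Astar)
    (hAspPos : Positivity P f Asp)
    (Yo : Z → Fin n → ℝ) (hYo : ∀ (z : Z) (i : Fin n), Yo z i = Yt i (f z (Astar i))) :
    ∀ cl ck : C,
      expec P (fun z => tauHat P f Asp Yo cl ck z) =
        tauBar Yt cl ck +
          (1 / (n : ℝ)) * ∑ i, ∑ cj : C,
            ((pCond P f Astar Asp i cj cl - ind (cj = cl)) -
              (pCond P f Astar Asp i cj ck - ind (cj = ck))) * Yt i cj := by
  intro cl ck
  have hsplit : expec P (fun z => tauHat P f Asp Yo cl ck z) =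
      expec P (fun z => muHat P f Asp Yo cl z) - expec P (fun z => muHat P f Asp Yo ck z) := by
    simp only [expec, tauHat, ← Finset.sum_sub_distrib]
    exact Finset.sum_congr rfl fun z _ => by ring
  rw [hsplit, muHat_expec P f Yt Astar Asp Yo hYo cl, muHat_expec P f Yt Astar Asp Yo hYo ck]
  have per_i : ∀ i : Fin n,
      (∑ cj : C, pCond P f Astar Asp i cj cl * Yt i cj) -
        (∑ cj : C, pCond P f Astar Asp i cj ck * Yt i cj) =
      (Yt i cl - Yt i ck) +
        ∑ cj : C, ((pCond P f Astar Asp i cj cl - ind (cj = cl)) -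
          (pCond P f Astar Asp i cj ck - ind (cj = ck))) * Yt i cj := by
    intro i
    simp only [sub_mul, Finset.sum_sub_distrib]
    rw [sum_ind_mul_right (Yt i) cl, sum_ind_mul_right (Yt i) ck]
    ring
  rw [← mul_sub, ← Finset.sum_sub_distrib,
    Finset.sum_congr rfl fun i _ => per_i i]
  simp only [tauBar, muBar, Finset.sum_add_distrib, Finset.sum_sub_distrib]
  ring
end
end

section
/- Let 𝒜 be a finite collection of networks, each satisfying positivity, such that 𝒜 satisfies joint positivity and 𝒜 contains at least one network that correctly specifies the interference structure. Under consistency, the NMR Horvitz–Thompson estimator is unbiased: E_Z[μ̂_𝒜(c)(Z)] = μ(c) for every exposure level c. -/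
open Finset

noncomputable section

open scoped Classical

/-- Indicator `I_i^𝒜(z, c)` that unit `i` has exposure `c` under every network in `𝒜`. -/
def indAll {n : ℕ} {Z C : Type} [DecidableEq C] (f : Z → (Fin n → Bool) → C)
    (𝒜 : Finset (Fin n → Fin n → Bool)) (z : Z) (i : Fin n) (c : C) : ℝ :=
  ∏ A ∈ 𝒜, ind (f z (A i) = c)

/-- Joint exposure probability `p_i^𝒜(c)`. -/
def pNMR {n : ℕ} {Z C : Type} [Fintype Z] [DecidableEq C] (P : Z → ℝ)
    (f : Z → (Fin n → Bool) → C) (𝒜 : Finset (Fin n → Fin n → Bool)) (i : Fin n) (c : C) : ℝ :=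
  expec P (fun z => indAll f 𝒜 z i c)

/-- Joint positivity of the collection `𝒜`. -/
def JointPositivity {n : ℕ} {Z C : Type} [Fintype Z] [DecidableEq C] (P : Z → ℝ)
    (f : Z → (Fin n → Bool) → C) (𝒜 : Finset (Fin n → Fin n → Bool)) : Prop :=
  ∀ (i : Fin n) (c : C), 0 < pNMR P f 𝒜 i c

/-- NMR Horvitz–Thompson estimator of `μ(c)`. -/
def muHatNMR {n : ℕ} {Z C : Type} [Fintype Z] [DecidableEq C] (P : Z → ℝ)
    (f : Z → (Fin n → Bool) → C) (𝒜 : Finset (Fin n → Fin n → Bool))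
    (Yo : Z → Fin n → ℝ) (c : C) (z : Z) : ℝ :=
  (1 / (n : ℝ)) * ∑ i, indAll f 𝒜 z i c * Yo z i / pNMR P f 𝒜 i c

/-- NMR plug-in estimator of `τ(c, c')`. -/
def tauHatNMR {n : ℕ} {Z C : Type} [Fintype Z] [DecidableEq C] (P : Z → ℝ)
    (f : Z → (Fin n → Bool) → C) (𝒜 : Finset (Fin n → Fin n → Bool))
    (Yo : Z → Fin n → ℝ) (c c' : C) (z : Z) : ℝ :=
  muHatNMR P f 𝒜 Yo c z - muHatNMR P f 𝒜 Yo c' z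

/-- Pairwise joint exposure probability `p_{ij}^𝒜(c, c')`. -/
def pPairNMR {n : ℕ} {Z C : Type} [Fintype Z] [DecidableEq C] (P : Z → ℝ)
    (f : Z → (Fin n → Bool) → C) (𝒜 : Finset (Fin n → Fin n → Bool))
    (i j : Fin n) (c c' : C) : ℝ :=
  expec P (fun z => indAll f 𝒜 z i c * indAll f 𝒜 z j c')

/-- Theorem 2: the NMR Horvitz–Thompson estimator is unbiased if at least one network
in the collection `𝒜` correctly specifies the interference structure. -/
theorem NMR_HT_unbiased {n : ℕ} {Z C : Type} [Fintype Z] [Fintype C] [DecidableEq C]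
    (P : Z → ℝ) (hP : ∀ z, 0 ≤ P z) (hPsum : ∑ z, P z = 1)
    (f : Z → (Fin n → Bool) → C) (Y : Fin n → Z → ℝ) (Yt : Fin n → C → ℝ)
    (𝒜 : Finset (Fin n → Fin n → Bool))
    (h𝒜Net : ∀ A ∈ 𝒜, IsNetwork A)
    (h𝒜Pos : ∀ A ∈ 𝒜, Positivity P f A)
    (hJoint : JointPositivity P f 𝒜)
    (h𝒜corr : ∃ A ∈ 𝒜, CorrectlySpecifies P f Y Yt A)
    (Astar : Fin n → Fin n → Bool) (hAstarNet : IsNetwork Astar)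
    (hAstar : CorrectlySpecifies P f Y Yt Astar)
    (Yo : Z → Fin n → ℝ) (hYo : ∀ (z : Z) (i : Fin n), Yo z i = Yt i (f z (Astar i))) :
    ∀ c : C, expec P (fun z => muHatNMR P f 𝒜 Yo c z) = muBar Yt c := by
  intro c
  obtain ⟨A₀, hA₀mem, hA₀pos, hA₀eq⟩ := h𝒜corr
  have key : ∀ (z : Z) (i : Fin n), indAll f 𝒜 z i c * Yo z i = indAll f 𝒜 z i c * Yt i c := by
    intro z i
    by_cases h : indAll f 𝒜 z i c = 0
    · simp [h]
    · have hall : ∀ A ∈ 𝒜, f z (A i) = c := by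
        intro A hA
        by_contra hne
        exact h (Finset.prod_eq_zero hA (by simp [ind, hne]))
      rw [hYo, ← hAstar.2, hA₀eq, hall A₀ hA₀mem]
  have hsum : ∀ i : Fin n, ∑ z, P z * (indAll f 𝒜 z i c * Yo z i / pNMR P f 𝒜 i c)
      = Yt i c := by
    intro i
    have hp : pNMR P f 𝒜 i c ≠ 0 := (hJoint i c).ne'
    have : ∀ z, P z * (indAll f 𝒜 z i c * Yo z i / pNMR P f 𝒜 i c)
        = (P z * indAll f 𝒜 z i c) * (Yt i c / pNMR P f 𝒜 i c) := by
      intro z; rw [key z i]; ring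
    rw [Finset.sum_congr rfl fun z _ => this z, ← Finset.sum_mul]
    have : ∑ z, P z * indAll f 𝒜 z i c = pNMR P f 𝒜 i c := rfl
    rw [this]
    field_simp
  unfold expec muHatNMR muBar
  calc ∑ z, P z * ((1 / (n:ℝ)) * ∑ i, indAll f 𝒜 z i c * Yo z i / pNMR P f 𝒜 i c)
      = (1 / (n:ℝ)) * ∑ z, ∑ i, P z * (indAll f 𝒜 z i c * Yo z i / pNMR P f 𝒜 i c) := by
        rw [Finset.mul_sum]
        refine Finset.sum_congr rfl fun z _ => ?_
        rw [mul_left_comm, Finset.mul_sum]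
    _ = (1 / (n:ℝ)) * ∑ i, ∑ z, P z * (indAll f 𝒜 z i c * Yo z i / pNMR P f 𝒜 i c) := by
        rw [Finset.sum_comm]
    _ = (1 / (n:ℝ)) * ∑ i, Yt i c := by
        rw [Finset.sum_congr rfl fun i _ => hsum i]
end
end

section
/- Let 𝒜 be a finite collection of networks, each satisfying positivity, such that 𝒜 satisfies joint positivity and 𝒜 contains at least one network that correctly specifies the interference structure. Under consistency, the NMR plug-in causal effect estimator is unbiased: E_Z[τ̂_𝒜(c_ℓ,c_k)(Z)] = τ(c_ℓ,c_k) for all exposure levels c_ℓ, c_k. -/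
open Finset

noncomputable section

open scoped Classical

/-- The NMR plug-in causal effect estimator is unbiased if at least one network
in the collection `𝒜` correctly specifies the interference structure. -/
theorem NMR_tau_unbiased {n : ℕ} {Z C : Type} [Fintype Z] [Fintype C] [DecidableEq C]
    (P : Z → ℝ) (hP : ∀ z, 0 ≤ P z) (hPsum : ∑ z, P z = 1)
    (f : Z → (Fin n → Bool) → C) (Y : Fin n → Z → ℝ) (Yt : Fin n → C → ℝ)
    (𝒜 : Finset (Fin n → Fin n → Bool))
    (h𝒜Net : ∀ A ∈ 𝒜, IsNetwork A)
    (h𝒜Pos : ∀ A ∈ 𝒜, Positivity P f A)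
    (hJoint : JointPositivity P f 𝒜)
    (h𝒜corr : ∃ A ∈ 𝒜, CorrectlySpecifies P f Y Yt A)
    (Astar : Fin n → Fin n → Bool) (hAstarNet : IsNetwork Astar)
    (hAstar : CorrectlySpecifies P f Y Yt Astar)
    (Yo : Z → Fin n → ℝ) (hYo : ∀ (z : Z) (i : Fin n), Yo z i = Yt i (f z (Astar i))) :
    ∀ cl ck : C, expec P (fun z => tauHatNMR P f 𝒜 Yo cl ck z) = tauBar Yt cl ck := by
  obtain ⟨A₀, hA₀mem, hA₀corr⟩ := h𝒜corr
  have key : ∀ c, expec P (fun z => muHatNMR P f 𝒜 Yo c z) = muBar Yt c := by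
    intro c
    have h1 : ∀ (i : Fin n) (z : Z),
        indAll f 𝒜 z i c * Yo z i = indAll f 𝒜 z i c * Yt i c := by
      intro i z
      by_cases h : ∀ A ∈ 𝒜, f z (A i) = c
      · have hYoz : Yo z i = Yt i c := by
          rw [hYo z i, ← hAstar.2 i z, hA₀corr.2 i z, h A₀ hA₀mem]
        rw [hYoz]
      · push_neg at h
        obtain ⟨A, hAmem, hAne⟩ := h
        have hz : indAll f 𝒜 z i c = 0 := by
          unfold indAll
          exact Finset.prod_eq_zero hAmem (by simp [ind, hAne])
        rw [hz]; ring
    unfold expec muHatNMR muBar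
    have hswap : ∑ z, P z * ((1 / (n : ℝ)) *
        ∑ i, indAll f 𝒜 z i c * Yo z i / pNMR P f 𝒜 i c) =
        (1 / (n : ℝ)) * ∑ i, ∑ z, P z * (indAll f 𝒜 z i c * Yo z i / pNMR P f 𝒜 i c) := by
      calc ∑ z, P z * ((1 / (n : ℝ)) *
              ∑ i, indAll f 𝒜 z i c * Yo z i / pNMR P f 𝒜 i c)
          = ∑ z, ∑ i, (1 / (n : ℝ)) *
              (P z * (indAll f 𝒜 z i c * Yo z i / pNMR P f 𝒜 i c)) := by
            apply Finset.sum_congr rfl; intro z _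
            rw [Finset.mul_sum, Finset.mul_sum]
            apply Finset.sum_congr rfl; intro i _; ring
        _ = ∑ i, ∑ z, (1 / (n : ℝ)) *
              (P z * (indAll f 𝒜 z i c * Yo z i / pNMR P f 𝒜 i c)) := Finset.sum_comm
        _ = (1 / (n : ℝ)) * ∑ i, ∑ z,
              P z * (indAll f 𝒜 z i c * Yo z i / pNMR P f 𝒜 i c) := by
            rw [Finset.mul_sum]
            apply Finset.sum_congr rfl; intro i _
            rw [Finset.mul_sum]
    rw [hswap]
    congr 1
    apply Finset.sum_congr rfl
    intro i _
    have hi : ∑ z, P z * (indAll f 𝒜 z i c * Yo z i / pNMR P f 𝒜 i c) =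
        (∑ z, P z * indAll f 𝒜 z i c) * (Yt i c / pNMR P f 𝒜 i c) := by
      rw [Finset.sum_mul]
      apply Finset.sum_congr rfl
      intro z _
      rw [h1 i z]; ring
    rw [hi]
    have hp : (∑ z, P z * indAll f 𝒜 z i c) = pNMR P f 𝒜 i c := rfl
    rw [hp]
    field_simp [(hJoint i c).ne']
  intro cl ck
  have : expec P (fun z => tauHatNMR P f 𝒜 Yo cl ck z) =
      expec P (fun z => muHatNMR P f 𝒜 Yo cl z) - expec P (fun z => muHatNMR P f 𝒜 Yo ck z) := by
    unfold expec tauHatNMR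
    rw [← Finset.sum_sub_distrib]
    apply Finset.sum_congr rfl
    intro z _; ring
  rw [this, key cl, key ck, tauBar]
end
end

section
/- Let 𝒜 be a finite collection of networks satisfying joint positivity and containing at least one network that correctly specifies the interference structure. Under consistency, the numerator and denominator of the NMR Hajek estimator at level c are each unbiased: E_Z[V_1(Z)] = Σ_{i=1}^n Ỹ_i(c) and E_Z[V_2(Z)] = n, where V_1(Z) = Σ_{i=1}^n I_i^𝒜(Z,c) Y_i^o(Z) / p_i^𝒜(c) and V_2(Z) = Σ_{i=1}^n I_i^𝒜(Z,c) / p_i^𝒜(c). -/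
open Finset

noncomputable section

open scoped Classical

/-- The numerator and the denominator of the NMR Hajek estimator are each unbiased. -/
theorem NMR_Hajek_num_den_unbiased {n : ℕ} {Z C : Type} [Fintype Z] [Fintype C] [DecidableEq C]
    (P : Z → ℝ) (hP : ∀ z, 0 ≤ P z) (hPsum : ∑ z, P z = 1)
    (f : Z → (Fin n → Bool) → C) (Y : Fin n → Z → ℝ) (Yt : Fin n → C → ℝ)
    (𝒜 : Finset (Fin n → Fin n → Bool))
    (h𝒜Net : ∀ A ∈ 𝒜, IsNetwork A)
    (hJoint : JointPositivity P f 𝒜)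
    (h𝒜corr : ∃ A ∈ 𝒜, CorrectlySpecifies P f Y Yt A)
    (Astar : Fin n → Fin n → Bool) (hAstarNet : IsNetwork Astar)
    (hAstar : CorrectlySpecifies P f Y Yt Astar)
    (Yo : Z → Fin n → ℝ) (hYo : ∀ (z : Z) (i : Fin n), Yo z i = Yt i (f z (Astar i))) :
    ∀ c : C,
      expec P (fun z => ∑ i, indAll f 𝒜 z i c * Yo z i / pNMR P f 𝒜 i c) = (∑ i, Yt i c) ∧
      expec P (fun z => ∑ i, indAll f 𝒜 z i c / pNMR P f 𝒜 i c) = (n : ℝ) := by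
  intro c
  obtain ⟨A, hA𝒜, hAcorr⟩ := h𝒜corr
  have key : ∀ (z : Z) (i : Fin n),
      indAll f 𝒜 z i c * Yo z i = indAll f 𝒜 z i c * Yt i c := by
    intro z i
    by_cases h0 : indAll f 𝒜 z i c = 0
    · simp [h0]
    · have hall : ∀ B ∈ 𝒜, f z (B i) = c := by
        intro B hB
        have := Finset.prod_ne_zero_iff.mp h0 B hB
        by_contra hne
        simp [ind, hne] at this
      have hYo : Yo z i = Yt i c := by
        rw [hYo z i, ← hAstar.2 i z, hAcorr.2 i z, hall A hA𝒜]
      rw [hYo]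
  have hexp : ∀ i : Fin n, ∑ z, P z * indAll f 𝒜 z i c = pNMR P f 𝒜 i c := by
    intro i; rfl
  constructor
  · unfold expec
    simp only [Finset.mul_sum]
    rw [Finset.sum_comm]
    have : ∀ i : Fin n, ∑ z, P z * (indAll f 𝒜 z i c * Yo z i / pNMR P f 𝒜 i c)
        = Yt i c := by
      intro i
      have hp := (hJoint i c).ne'
      calc ∑ z, P z * (indAll f 𝒜 z i c * Yo z i / pNMR P f 𝒜 i c)
          = (∑ z, P z * indAll f 𝒜 z i c) * Yt i c / pNMR P f 𝒜 i c := by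
            rw [Finset.sum_mul, Finset.sum_div]
            refine Finset.sum_congr rfl fun z _ => ?_
            have h := key z i
            field_simp
            linear_combination P z * h
        _ = Yt i c := by rw [hexp i]; field_simp
    simp_rw [this]
  · unfold expec
    simp only [Finset.mul_sum]
    rw [Finset.sum_comm]
    have : ∀ i : Fin n, ∑ z, P z * (indAll f 𝒜 z i c / pNMR P f 𝒜 i c) = 1 := by
      intro i
      have hp := (hJoint i c).ne'
      calc ∑ z, P z * (indAll f 𝒜 z i c / pNMR P f 𝒜 i c)
          = (∑ z, P z * indAll f 𝒜 z i c) / pNMR P f 𝒜 i c := by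
            rw [Finset.sum_div]
            exact Finset.sum_congr rfl fun z _ => (mul_div_assoc _ _ _).symm
        _ = 1 := by rw [hexp i]; field_simp
    simp_rw [this]
    simp
end
end

section
/- Let A ≠ A' be two networks on n units such that every unit has a nonempty neighborhood in A and in A' (so that all four exposure levels of the heterogeneous thresholds exposure mapping have positive probability under any full-support design). Then there exist a binary treatment vector z ∈ {0,1}^n and a unit i such that f(z,A_i) ≠ f(z,A'_i), where f is the heterogeneous thresholds exposure mapping with thresholds ν_i ∈ [0,1). -/
open Finset

noncomputable section

open scoped Classical

/-- The neighborhood `N_i(A)` of unit `i` in network `A`. -/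
def nbhd {n : ℕ} (A : Fin n → Fin n → Bool) (i : Fin n) : Finset (Fin n) :=
  univ.filter (fun j => A i j = true)

/-- Proportion of treated neighbors `g(z, A_i)`. -/
def gprop {n : ℕ} (z : Fin n → Bool) (A : Fin n → Fin n → Bool) (i : Fin n) : ℝ :=
  (∑ j ∈ nbhd A i, if z j then (1 : ℝ) else 0) / ((nbhd A i).card : ℝ)

/-- The four exposure levels of the heterogeneous thresholds exposure mapping. -/
inductive Exposure : Type
  | c11 | c01 | c10 | c00
  deriving DecidableEq

/-- Heterogeneous thresholds exposure mapping with thresholds `ν`. -/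
def hetExp {n : ℕ} (ν : Fin n → ℝ) (z : Fin n → Bool) (A : Fin n → Fin n → Bool)
    (i : Fin n) : Exposure :=
  if z i then (if ν i < gprop z A i then .c11 else .c10)
  else (if ν i < gprop z A i then .c01 else .c00)

/-!
Take `A i j = 1` and `A' i j = 0`, and treat only neighbours of `i` in `A`: `x` common
neighbours and `y` private ones. Then `i` sees `x + y` treated neighbours among
`d = |N_i(A)|` in `A` and `x` among `d' = |N_i(A')|` in `A'`, and `ν < k / d` iff
`⌊ν d⌋ < k`. If `i` had the same exposure in both networks for every such treatment, then
treating all of `N_i(A)` gives `⌊ν d'⌋ < p`, the number of common neighbours; treating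
`⌊ν d'⌋ + 1` common neighbours gives `⌊ν d⌋ ≤ ⌊ν d'⌋`; and then treating `⌊ν d'⌋` common
neighbours together with `j` is above threshold in `A` but not in `A'`.
-/

lemma hetExp_ne_of_not_iff {n : ℕ} (ν : Fin n → ℝ) (z : Fin n → Bool)
    (A A' : Fin n → Fin n → Bool) (i : Fin n)
    (h : ¬ (ν i < gprop z A i ↔ ν i < gprop z A' i)) :
    hetExp ν z A i ≠ hetExp ν z A' i := by
  unfold hetExp
  split_ifs <;> simp_all

lemma gprop_indicator {n : ℕ} (S : Finset (Fin n)) (A : Fin n → Fin n → Bool) (i : Fin n) :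
    gprop (fun x => decide (x ∈ S)) A i = (#(nbhd A i ∩ S) : ℝ) / #(nbhd A i) := by
  simp only [gprop, decide_eq_true_eq, sum_boole, filter_mem_eq_inter]

lemma lt_div_iff_floor_mul_lt {ν : ℝ} (hν : 0 ≤ ν) {d : ℕ} (hd : 0 < d) (k : ℕ) :
    ν < k / d ↔ ⌊ν * d⌋₊ < k := by
  have hd : (0 : ℝ) < d := Nat.cast_pos.mpr hd
  rw [lt_div_iff₀ hd, Nat.floor_lt (by positivity)]

lemma Finset.exists_subset_card_eq_add_card_inter_eq {α : Type*} [DecidableEq α]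
    {N N' : Finset α} {x y : ℕ} (hx : x ≤ #(N ∩ N')) (hy : y ≤ #(N \ N')) :
    ∃ S ⊆ N, #S = x + y ∧ #(N' ∩ S) = x := by
  obtain ⟨K, hK, rfl⟩ := exists_subset_card_eq hx
  obtain ⟨L, hL, rfl⟩ := exists_subset_card_eq hy
  have hKN : K ⊆ N := hK.trans inter_subset_left
  have hKN' : K ⊆ N' := hK.trans inter_subset_right
  have hLN' : Disjoint N' L := disjoint_of_subset_right hL disjoint_sdiff
  refine ⟨K ∪ L, union_subset hKN (hL.trans sdiff_subset), ?_, ?_⟩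
  · exact card_union_of_disjoint (disjoint_of_subset_left hKN' hLN')
  · rw [inter_union_distrib_left, inter_eq_right.mpr hKN', disjoint_iff_inter_eq_empty.mp hLN',
      union_empty]

/-- `f`, `f'` stand for `⌊ν * deg⌋₊` in the two networks, `p` for the number of common
neighbours and `a` for the number of private neighbours in the first network. -/
lemma exists_lt_add_not_iff_lt {f f' p a : ℕ} (hf : f < p + a) (ha : 0 < a) :
    ∃ x ≤ p, ∃ y ≤ a, ¬ (f < x + y ↔ f' < x) := by
  by_contra! h
  have htop := h p le_rfl a le_rfl
  have hmid := h (f' + 1) (by omega) 0 (Nat.zero_le a)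
  have hlow := h f' (by omega) 1 ha
  omega

lemma exists_finset_not_iff_lt_div {α : Type*} [DecidableEq α] {ν : ℝ} (hν₀ : 0 ≤ ν)
    (hν₁ : ν < 1) {N N' : Finset α} (hN' : N'.Nonempty) (hNN' : (N \ N').Nonempty) :
    ∃ S : Finset α, ¬ (ν < #(N ∩ S) / #N ↔ ν < #(N' ∩ S) / #N') := by
  have hN : 0 < #N := card_pos.mpr (hNN'.mono sdiff_subset)
  have hfloor : ⌊ν * #N⌋₊ < #(N ∩ N') + #(N \ N') := by
    rw [card_inter_add_card_sdiff, Nat.floor_lt (by positivity)]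
    exact mul_lt_of_lt_one_left (Nat.cast_pos.mpr hN) hν₁
  obtain ⟨x, hx, y, hy, hxy⟩ :=
    exists_lt_add_not_iff_lt (f' := ⌊ν * #N'⌋₊) hfloor (card_pos.mpr hNN')
  obtain ⟨S, hSN, hS, hN'S⟩ := exists_subset_card_eq_add_card_inter_eq hx hy
  refine ⟨S, ?_⟩
  rwa [inter_eq_right.mpr hSN, lt_div_iff_floor_mul_lt hν₀ hN, lt_div_iff_floor_mul_lt hν₀
    (card_pos.mpr hN'), hS, hN'S]

lemma exists_hetExp_ne_of_adj {n : ℕ} (ν : Fin n → ℝ) {i j : Fin n} (hν₀ : 0 ≤ ν i)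
    (hν₁ : ν i < 1) (A A' : Fin n → Fin n → Bool) (hdegA' : (nbhd A' i).Nonempty)
    (hA : A i j = true) (hA' : A' i j = false) :
    ∃ (z : Fin n → Bool) (k : Fin n), hetExp ν z A k ≠ hetExp ν z A' k := by
  have hj : j ∈ nbhd A i \ nbhd A' i := by simp [nbhd, hA, hA']
  obtain ⟨S, hS⟩ := exists_finset_not_iff_lt_div hν₀ hν₁ hdegA' ⟨j, hj⟩
  refine ⟨fun x => decide (x ∈ S), i, hetExp_ne_of_not_iff ν _ A A' i ?_⟩
  rwa [gprop_indicator, gprop_indicator]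

theorem hetExp_separates_networks_general {n : ℕ} (ν : Fin n → ℝ)
    (hν : ∀ i, 0 ≤ ν i ∧ ν i < 1)
    (A A' : Fin n → Fin n → Bool)
    (hdegA : ∀ i, (nbhd A i).Nonempty) (hdegA' : ∀ i, (nbhd A' i).Nonempty)
    (hne : A ≠ A') :
    ∃ (z : Fin n → Bool) (i : Fin n), hetExp ν z A i ≠ hetExp ν z A' i := by
  obtain ⟨i, j, hij⟩ : ∃ i j, A i j ≠ A' i j := by
    simpa only [Ne, funext_iff, not_forall] using hne
  cases hA : A i j
  · obtain ⟨z, k, h⟩ := exists_hetExp_ne_of_adj ν (hν i).1 (hν i).2 A' A (hdegA i)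
      (by simpa [hA] using hij.symm) hA
    exact ⟨z, k, h.symm⟩
  · exact exists_hetExp_ne_of_adj ν (hν i).1 (hν i).2 A A' (hdegA' i) hA
      (by simpa [hA] using hij.symm)

/-- Proposition A.1: the heterogeneous thresholds exposure mapping separates any two
distinct networks in which every unit has a nonempty neighborhood. -/
theorem hetExp_separates_networks {n : ℕ} (ν : Fin n → ℝ)
    (hν : ∀ i, 0 ≤ ν i ∧ ν i < 1)
    (A A' : Fin n → Fin n → Bool)
    (hANet : IsNetwork A) (hA'Net : IsNetwork A')
    (hdegA : ∀ i, (nbhd A i).Nonempty) (hdegA' : ∀ i, (nbhd A' i).Nonempty)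
    (hne : A ≠ A') :
    ∃ (z : Fin n → Bool) (i : Fin n), hetExp ν z A i ≠ hetExp ν z A' i :=
  hetExp_separates_networks_general ν hν A A' hdegA hdegA' hne
end
end

section
/- Let 𝒜 be a finite collection of networks satisfying joint positivity and containing at least one network that correctly specifies the interference structure. Under consistency, for every exposure level c, the variance of the NMR Horvitz–Thompson estimator satisfies: Var_Z[μ̂_𝒜(c)(Z)] = n^{-2} Σ_{i=1}^n p_i^𝒜(c)(1 − p_i^𝒜(c)) (Ỹ_i(c)/p_i^𝒜(c))^2 + n^{-2} Σ_{i=1}^n Σ_{j≠i, p_ij^𝒜(c)>0} (p_ij^𝒜(c) − p_i^𝒜(c) p_j^𝒜(c)) · Ỹ_i(c) Ỹ_j(c) / (p_i^𝒜(c) p_j^𝒜(c)) − n^{-2} Σ_{i=1}^n Σ_{j≠i, p_ij^𝒜(c)=0} Ỹ_i(c) Ỹ_j(c). -/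
open Finset

noncomputable section

open scoped Classical

/-- Variance with respect to the treatment distribution `P`. -/
def varZ {Z : Type} [Fintype Z] (P : Z → ℝ) (g : Z → ℝ) : ℝ :=
  expec P (fun z => (g z - expec P g) ^ 2)

/-- Covariance with respect to the treatment distribution `P`. -/
def covZ {Z : Type} [Fintype Z] (P : Z → ℝ) (g h : Z → ℝ) : ℝ :=
  expec P (fun z => (g z - expec P g) * (h z - expec P h))


lemma ind_sq (p : Prop) [Decidable p] : ind p * ind p = ind p := by
  unfold ind; split <;> simp

lemma indAll_sq {n : ℕ} {Z C : Type} [DecidableEq C] (f : Z → (Fin n → Bool) → C)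
    (𝒜 : Finset (Fin n → Fin n → Bool)) (z : Z) (i : Fin n) (c : C) :
    indAll f 𝒜 z i c * indAll f 𝒜 z i c = indAll f 𝒜 z i c := by
  unfold indAll
  rw [← Finset.prod_mul_distrib]
  exact Finset.prod_congr rfl fun A _ => ind_sq _

lemma expec_sum {Z ι : Type} [Fintype Z] (P : Z → ℝ) (s : Finset ι) (g : ι → Z → ℝ) :
    expec P (fun z => ∑ i ∈ s, g i z) = ∑ i ∈ s, expec P (g i) := by
  unfold expec
  simp_rw [Finset.mul_sum]
  exact Finset.sum_comm

lemma expec_const_mul {Z : Type} [Fintype Z] (P : Z → ℝ) (a : ℝ) (g : Z → ℝ) :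
    expec P (fun z => a * g z) = a * expec P g := by
  unfold expec
  rw [Finset.mul_sum]
  exact Finset.sum_congr rfl fun z _ => by ring

lemma expec_cov {Z : Type} [Fintype Z] (P : Z → ℝ) (hPsum : ∑ z, P z = 1) (g h : Z → ℝ) :
    expec P (fun z => (g z - expec P g) * (h z - expec P h)) =
      expec P (fun z => g z * h z) - expec P g * expec P h := by
  unfold expec
  set a := ∑ z, P z * g z with ha
  set b := ∑ z, P z * h z with hb
  have hexp : ∀ z ∈ (Finset.univ : Finset Z), P z * ((g z - a) * (h z - b)) =
      (P z * (g z * h z) - a * (P z * h z)) - (b * (P z * g z) - (a * b) * P z) :=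
    fun z _ => by ring
  rw [Finset.sum_congr rfl hexp, Finset.sum_sub_distrib, Finset.sum_sub_distrib,
    Finset.sum_sub_distrib, ← Finset.mul_sum, ← Finset.mul_sum, ← Finset.mul_sum, hPsum,
    ← ha, ← hb]
  ring

/-- Variance of the NMR Horvitz–Thompson estimator. -/
theorem NMR_HT_variance {n : ℕ} {Z C : Type} [Fintype Z] [Fintype C] [DecidableEq C]
    (P : Z → ℝ) (hP : ∀ z, 0 ≤ P z) (hPsum : ∑ z, P z = 1)
    (f : Z → (Fin n → Bool) → C) (Y : Fin n → Z → ℝ) (Yt : Fin n → C → ℝ)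
    (𝒜 : Finset (Fin n → Fin n → Bool))
    (h𝒜Net : ∀ A ∈ 𝒜, IsNetwork A)
    (hJoint : JointPositivity P f 𝒜)
    (h𝒜corr : ∃ A ∈ 𝒜, CorrectlySpecifies P f Y Yt A)
    (Astar : Fin n → Fin n → Bool) (hAstarNet : IsNetwork Astar)
    (hAstar : CorrectlySpecifies P f Y Yt Astar)
    (Yo : Z → Fin n → ℝ) (hYo : ∀ (z : Z) (i : Fin n), Yo z i = Yt i (f z (Astar i))) :
    ∀ c : C,
      varZ P (fun z => muHatNMR P f 𝒜 Yo c z) =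
        (1 / (n : ℝ) ^ 2) * (∑ i, pNMR P f 𝒜 i c * (1 - pNMR P f 𝒜 i c) *
            (Yt i c / pNMR P f 𝒜 i c) ^ 2)
        + (1 / (n : ℝ) ^ 2) *
            (∑ i, ∑ j ∈ univ.filter (fun j => j ≠ i ∧ 0 < pPairNMR P f 𝒜 i j c c),
              (pPairNMR P f 𝒜 i j c c - pNMR P f 𝒜 i c * pNMR P f 𝒜 j c) *
                (Yt i c * Yt j c) / (pNMR P f 𝒜 i c * pNMR P f 𝒜 j c))
        - (1 / (n : ℝ) ^ 2) *
            (∑ i, ∑ j ∈ univ.filter (fun j => j ≠ i ∧ pPairNMR P f 𝒜 i j c c = 0),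
              Yt i c * Yt j c) := by
  intro c
  obtain ⟨A₀, hA₀mem, hA₀corr⟩ := h𝒜corr
  set p : Fin n → ℝ := fun i => pNMR P f 𝒜 i c with hp
  set X : Fin n → Z → ℝ := fun i z => indAll f 𝒜 z i c with hX
  set w : Fin n → ℝ := fun i => Yt i c / p i with hw
  have hppos : ∀ i, 0 < p i := fun i => hJoint i c
  have hpne : ∀ i, p i ≠ 0 := fun i => (hppos i).ne'
  -- indicator times observed outcome equals indicator times potential outcome
  have hkey : ∀ (z : Z) (i : Fin n), X i z * Yo z i = X i z * Yt i c := by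
    intro z i
    by_cases h0 : X i z = 0
    · rw [h0]; ring
    · congr 1
      have h1 : ind (f z (A₀ i) = c) ≠ 0 := by
        intro hz
        exact h0 (Finset.prod_eq_zero hA₀mem hz)
      have hf : f z (A₀ i) = c := by
        by_contra hc
        exact h1 (by simp [ind, hc])
      rw [hYo, ← hAstar.2, hA₀corr.2 i z, hf]
  -- rewrite the estimator
  have hmu : ∀ z, muHatNMR P f 𝒜 Yo c z = (1 / (n : ℝ)) * ∑ i, w i * X i z := by
    intro z
    unfold muHatNMR
    congr 1
    refine Finset.sum_congr rfl fun i _ => ?_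
    rw [show indAll f 𝒜 z i c * Yo z i = X i z * Yo z i from rfl, hkey z i]
    simp only [hw]
    field_simp
    ring
  -- expectation of X i is p i
  have hEX : ∀ i, expec P (X i) = p i := fun i => rfl
  -- pPair self
  have hPairSelf : ∀ i, pPairNMR P f 𝒜 i i c c = p i := by
    intro i
    unfold pPairNMR
    show expec P (fun z => X i z * X i z) = _
    rw [show (fun z => X i z * X i z) = X i from funext fun z => indAll_sq f 𝒜 z i c]
    exact hEX i
  -- pPair nonneg
  have hPairNonneg : ∀ i j, 0 ≤ pPairNMR P f 𝒜 i j c c := by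
    intro i j
    refine Finset.sum_nonneg fun z _ => mul_nonneg (hP z) (mul_nonneg ?_ ?_) <;>
      exact Finset.prod_nonneg fun A _ => by unfold ind; split <;> norm_num
  -- covariance of X i, X j
  have hcov : ∀ i j, expec P (fun z => (X i z - p i) * (X j z - p j)) =
      pPairNMR P f 𝒜 i j c c - p i * p j := by
    intro i j
    have := expec_cov P hPsum (X i) (X j)
    rw [hEX i, hEX j] at this
    rw [this]
    rfl
  -- compute the variance
  set T : Fin n → Fin n → ℝ :=
    fun i j => w i * w j * (pPairNMR P f 𝒜 i j c c - p i * p j) with hT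
  have hvar : varZ P (fun z => muHatNMR P f 𝒜 Yo c z) =
      (1 / (n : ℝ)) ^ 2 * ∑ i, ∑ j, T i j := by
    unfold varZ
    have hEg : expec P (fun z => muHatNMR P f 𝒜 Yo c z) =
        (1 / (n : ℝ)) * ∑ i, w i * p i := by
      rw [show (fun z => muHatNMR P f 𝒜 Yo c z) =
          (fun z => (1 / (n : ℝ)) * ∑ i, w i * X i z) from funext hmu,
        expec_const_mul]
      congr 1
      rw [expec_sum]
      exact Finset.sum_congr rfl fun i _ => by rw [show (fun z => w i * X i z) = _ from rfl,
        expec_const_mul, hEX]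
    have hdev : ∀ z, muHatNMR P f 𝒜 Yo c z - expec P (fun z => muHatNMR P f 𝒜 Yo c z) =
        (1 / (n : ℝ)) * ∑ i, w i * (X i z - p i) := by
      intro z
      rw [hmu z, hEg, ← mul_sub, ← Finset.sum_sub_distrib]
      congr 1
      exact Finset.sum_congr rfl fun i _ => by ring
    have hsq : ∀ z, (muHatNMR P f 𝒜 Yo c z - expec P (fun z => muHatNMR P f 𝒜 Yo c z)) ^ 2 =
        (1 / (n : ℝ)) ^ 2 * ∑ i, ∑ j, (w i * w j) * ((X i z - p i) * (X j z - p j)) := by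
      intro z
      rw [hdev z, mul_pow, pow_two (∑ i, w i * (X i z - p i)), Finset.sum_mul_sum]
      congr 1
      exact Finset.sum_congr rfl fun i _ => Finset.sum_congr rfl fun j _ => by ring
    rw [show (fun z => (muHatNMR P f 𝒜 Yo c z - expec P fun z => muHatNMR P f 𝒜 Yo c z) ^ 2)
        = (fun z => (1 / (n : ℝ)) ^ 2 *
            ∑ i, ∑ j, (w i * w j) * ((X i z - p i) * (X j z - p j))) from funext hsq,
      expec_const_mul]
    congr 1
    rw [expec_sum]
    refine Finset.sum_congr rfl fun i _ => ?_
    rw [expec_sum]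
    refine Finset.sum_congr rfl fun j _ => ?_
    rw [show (fun z => w i * w j * ((X i z - p i) * (X j z - p j))) = _ from rfl,
      expec_const_mul, hcov i j]
  -- split the double sum
  have hsplit : ∀ i : Fin n, ∑ j, T i j =
      T i i
      + ∑ j ∈ univ.filter (fun j => j ≠ i ∧ 0 < pPairNMR P f 𝒜 i j c c), T i j
      + ∑ j ∈ univ.filter (fun j => j ≠ i ∧ pPairNMR P f 𝒜 i j c c = 0), T i j := by
    intro i
    have h1 : ∑ j, T i j = T i i + ∑ j ∈ univ.erase i, T i j :=
      (Finset.add_sum_erase univ (T i) (Finset.mem_univ i)).symm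
    have h2 : (univ.erase i : Finset (Fin n)) = univ.filter (fun j => j ≠ i) := by
      ext j; simp [Finset.mem_erase]
    have h3 : ∑ j ∈ univ.filter (fun j => j ≠ i), T i j =
        ∑ j ∈ (univ.filter (fun j => j ≠ i)).filter
            (fun j => 0 < pPairNMR P f 𝒜 i j c c), T i j
        + ∑ j ∈ (univ.filter (fun j => j ≠ i)).filter
            (fun j => ¬ 0 < pPairNMR P f 𝒜 i j c c), T i j :=
      (Finset.sum_filter_add_sum_filter_not _ _ _).symm
    rw [h1, h2, h3, Finset.filter_filter, Finset.filter_filter, ← add_assoc]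
    congr 1
    apply Finset.sum_congr _ fun _ _ => rfl
    refine Finset.filter_congr fun j _ => ?_
    constructor
    · rintro ⟨hne, hnp⟩
      exact ⟨hne, le_antisymm (not_lt.mp hnp) (hPairNonneg i j)⟩
    · rintro ⟨hne, hz⟩
      exact ⟨hne, by rw [hz]; exact lt_irrefl 0⟩
  have hsum : ∑ i, ∑ j, T i j =
      (∑ i, p i * (1 - p i) * (Yt i c / p i) ^ 2)
      + (∑ i, ∑ j ∈ univ.filter (fun j => j ≠ i ∧ 0 < pPairNMR P f 𝒜 i j c c),
          (pPairNMR P f 𝒜 i j c c - p i * p j) * (Yt i c * Yt j c) / (p i * p j))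
      + (∑ i, ∑ j ∈ univ.filter (fun j => j ≠ i ∧ pPairNMR P f 𝒜 i j c c = 0),
          -(Yt i c * Yt j c)) := by
    rw [show ∑ i, ∑ j, T i j = ∑ i, (T i i
        + ∑ j ∈ univ.filter (fun j => j ≠ i ∧ 0 < pPairNMR P f 𝒜 i j c c), T i j
        + ∑ j ∈ univ.filter (fun j => j ≠ i ∧ pPairNMR P f 𝒜 i j c c = 0), T i j)
      from Finset.sum_congr rfl fun i _ => hsplit i, Finset.sum_add_distrib,
      Finset.sum_add_distrib]
    congr 1
    · congr 1
      · refine Finset.sum_congr rfl fun i _ => ?_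
        simp only [hT]
        simp only [hw, hPairSelf i]
        field_simp
      · refine Finset.sum_congr rfl fun i _ => Finset.sum_congr rfl fun j hj => ?_
        simp only [hT]
        simp only [hw]
        ring
    · refine Finset.sum_congr rfl fun i _ => Finset.sum_congr rfl fun j hj => ?_
      simp only [Finset.mem_filter] at hj
      simp only [hT]
      rw [hj.2.2]
      simp only [hw]
      rw [show Yt i c / p i * (Yt j c / p j) * (0 - p i * p j) =
          -(Yt i c * Yt j c * (p i * p j / (p i * p j))) from by ring,
        div_self (mul_ne_zero (hpne i) (hpne j)), mul_one]
  rw [hvar, hsum]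
  simp only [Finset.sum_neg_distrib]
  rw [hp]
  ring
end
end
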